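/- Let V₁ ⊆ ℂ be an open set, let φ, α : V₁ → ℝ be measurable functions with α(z) < φ(z) for all z ∈ V₁, let n ≥ 2 be an integer, and let U₁ = {(z,w) ∈ ℂ² : z ∈ V₁, e^{−φ(z)} < |w| < e^{−α(z)}}. Define the weight e^{−λ_n(z)} = (π/(n−1)) (e^{(2n−2)φ(z)} − e^{(2n−2)α(z)}), so that e^{−λ_n(z)} = ∫_{e^{−φ(z)}<|w|<e^{−α(z)}} |w|^{−2n} dV(w). Suppose g : V₁ → ℂ is measurable with ∫_{V₁} |g(z)|² e^{−λ_n(z)} dV(z) < ∞ and ∫_{V₁} g(z) \overline{h(z)} e^{−λ_n(z)} dV(z) = 0 for every holomorphic function h on V₁ with ∫_{V₁} |h|² e^{−λ_n} dV < ∞. Then the function G(z,w) = g(z) w^{−n} belongs to L²(U₁) and ⟨G, h(z)wᵐ⟩_{L²(U₁)} = 0 for every integer m and every holomorphic function h on V₁ such that h(z)wᵐ ∈ L²(U₁). -/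

import Mathlib

open MeasureTheory

/-- The Hartogs-type set `{(z,w) : z ∈ V, σ(z) < |w| < τ(z)}` in `ℂ²`. -/
def hartogsSet (V : Set ℂ) (σ τ : ℂ → ℝ) : Set (ℂ × ℂ) :=
  {p : ℂ × ℂ | p.1 ∈ V ∧ σ p.1 < ‖p.2‖ ∧ ‖p.2‖ < τ p.1}

/-- The weight `e^{-λ_n(z)} = (π/(n-1)) (e^{(2n-2)φ(z)} - e^{(2n-2)α(z)})`, i.e. the value
`∫_{e^{-φ(z)}<|w|<e^{-α(z)}} |w|^{-2n} dV(w)`. -/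
noncomputable def fiberWeight (n : ℤ) (φ α : ℂ → ℝ) (z : ℂ) : ℝ :=
  Real.pi / ((n : ℝ) - 1) *
    (Real.exp ((2 * (n : ℝ) - 2) * φ z) - Real.exp ((2 * (n : ℝ) - 2) * α z))

/-!
By Fubini over the fibres `{e^{-φ(z)} < |w| < e^{-α(z)}}`, every integral over `U₁` reduces to
integrals of `w^p \bar w^q` over annuli. In polar coordinates these vanish for `p ≠ q`, because the
angular factor is `∫ e^{i(p-q)θ} dθ`, while for `p = q = -n` the radial factor gives exactly the
weight `e^{-λ_n(z)}`. Hence `‖G‖²_{L²(U₁)} = ∫ |g|² e^{-λ_n}`, the pairing with `h(z) wᵐ` vanishes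
for `m ≠ -n`, and for `m = -n` it is the pairing of `g` and `h` in `L²(V₁, λ_n)`, to which `h`
belongs because `h(z) w^{-n} ∈ L²(U₁)`.
-/

open Set
open scoped Real ComplexConjugate

def annulus (a b : ℝ) : Set ℂ := {w | a < ‖w‖ ∧ ‖w‖ < b}

theorem measurableSet_annulus (a b : ℝ) : MeasurableSet (annulus a b) :=
  (measurableSet_lt measurable_const measurable_norm).inter
    (measurableSet_lt measurable_norm measurable_const)

section Hartogs

variable {V : Set ℂ} {σ τ : ℂ → ℝ}

theorem measurableSet_hartogsSet (hV : MeasurableSet V) (hσ : Measurable σ)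
    (hτ : Measurable τ) : MeasurableSet (hartogsSet V σ τ) :=
  (measurable_fst hV).inter ((measurableSet_lt (hσ.comp measurable_fst)
    (measurable_norm.comp measurable_snd)).inter
      (measurableSet_lt (measurable_norm.comp measurable_snd) (hτ.comp measurable_fst)))

theorem indicator_hartogsSet_apply {E : Type*} [Zero E] (F : ℂ × ℂ → E) (z w : ℂ) :
    (hartogsSet V σ τ).indicator F (z, w) =
      V.indicator (fun z => (annulus (σ z) (τ z)).indicator (fun w => F (z, w)) w) z := by
  by_cases hz : z ∈ V
  · by_cases hw : w ∈ annulus (σ z) (τ z)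
    · rw [indicator_of_mem hz, indicator_of_mem hw,
        indicator_of_mem (show (z, w) ∈ hartogsSet V σ τ from ⟨hz, hw⟩)]
    · rw [indicator_of_mem hz, indicator_of_notMem hw,
        indicator_of_notMem fun hzw => hw hzw.2]
  · rw [indicator_of_notMem hz, indicator_of_notMem fun hzw => hz hzw.1]

theorem integral_indicator_hartogsSet {E : Type*} [NormedAddCommGroup E] [NormedSpace ℝ E]
    (F : ℂ × ℂ → E) (z : ℂ) :
    ∫ w, (hartogsSet V σ τ).indicator F (z, w) =
      V.indicator (fun z => ∫ w in annulus (σ z) (τ z), F (z, w)) z := by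
  by_cases hz : z ∈ V <;>
    simp [indicator_hartogsSet_apply, hz, integral_indicator (measurableSet_annulus _ _)]

theorem integral_hartogsSet {E : Type*} [NormedAddCommGroup E] [NormedSpace ℝ E]
    (hV : MeasurableSet V) (hσ : Measurable σ) (hτ : Measurable τ)
    {F : ℂ × ℂ → E} (hF : IntegrableOn F (hartogsSet V σ τ)) :
    ∫ p in hartogsSet V σ τ, F p = ∫ z in V, ∫ w in annulus (σ z) (τ z), F (z, w) := by
  have hU := measurableSet_hartogsSet hV hσ hτ
  rw [← integral_indicator hU, Measure.volume_eq_prod,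
    integral_prod _ (by rw [← Measure.volume_eq_prod]; exact hF.integrable_indicator hU)]
  simp_rw [integral_indicator_hartogsSet, integral_indicator hV]

theorem integrableOn_hartogsSet_iff {E : Type*} [NormedAddCommGroup E] [NormedSpace ℝ E]
    (hV : MeasurableSet V) (hσ : Measurable σ) (hτ : Measurable τ)
    {F : ℂ × ℂ → E} (hFm : AEStronglyMeasurable F (volume.restrict (hartogsSet V σ τ)))
    (hfib : ∀ z ∈ V, IntegrableOn (fun w => F (z, w)) (annulus (σ z) (τ z))) :
    IntegrableOn F (hartogsSet V σ τ) ↔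
      IntegrableOn (fun z => ∫ w in annulus (σ z) (τ z), ‖F (z, w)‖) V := by
  have hU := measurableSet_hartogsSet hV hσ hτ
  rw [← integrable_indicator_iff hU, Measure.volume_eq_prod, integrable_prod_iff
    (by rw [← Measure.volume_eq_prod]; exact (aestronglyMeasurable_indicator_iff hU).2 hFm)]
  have hfib' : ∀ z, Integrable (fun w => (hartogsSet V σ τ).indicator F (z, w)) := by
    intro z
    simp only [indicator_hartogsSet_apply]
    by_cases hz : z ∈ V
    · simpa only [indicator_of_mem hz] using
        (hfib z hz).integrable_indicator (measurableSet_annulus _ _)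
    · simp only [indicator_of_notMem hz]
      exact integrable_zero _ _ _
  simp_rw [norm_indicator_eq_indicator_norm, integral_indicator_hartogsSet]
  rw [integrable_indicator_iff hV, and_iff_right (.of_forall hfib')]

theorem integral_hartogsSet_mul_zpow_mul_conj (hV : MeasurableSet V) (hσ : Measurable σ)
    (hτ : Measurable τ) {c d : ℂ → ℂ} {p q : ℤ}
    (hint : IntegrableOn (fun x : ℂ × ℂ => c x.1 * x.2 ^ p * conj (d x.1 * x.2 ^ q))
      (hartogsSet V σ τ)) :
    ∫ x in hartogsSet V σ τ, c x.1 * x.2 ^ p * conj (d x.1 * x.2 ^ q) =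
      ∫ z in V, c z * conj (d z) * ∫ w in annulus (σ z) (τ z), w ^ p * conj (w ^ q) := by
  rw [integral_hartogsSet hV hσ hτ hint]
  refine setIntegral_congr_fun hV fun z _ => ?_
  rw [← integral_const_mul]
  congr 1 with w
  rw [map_mul]
  ring

end Hartogs

open Complex in
theorem polarCoord_symm_zpow_mul_conj_zpow {r : ℝ} (hr : 0 < r) (θ : ℝ) (p q : ℤ) :
    r • (Complex.polarCoord.symm (r, θ) ^ p * conj (Complex.polarCoord.symm (r, θ) ^ q)) =
      (r : ℂ) ^ (p + q + 1) * cexp ((p - q : ℤ) * θ * I) := by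
  have hw : Complex.polarCoord.symm (r, θ) = r * cexp (θ * I) := by
    rw [Complex.polarCoord_symm_apply, exp_mul_I]; push_cast; ring
  have hr0 : (r : ℂ) ≠ 0 := ofReal_ne_zero.2 hr.ne'
  rw [hw, mul_zpow, mul_zpow, map_mul, map_zpow₀, map_zpow₀, conj_ofReal, ← exp_conj,
    ← exp_int_mul, ← exp_int_mul, real_smul, zpow_add_one₀ hr0, zpow_add₀ hr0]
  have hθ : cexp (p * (θ * I)) * cexp (q * conj (θ * I)) = cexp ((p - q : ℤ) * θ * I) := by
    rw [← exp_add, map_mul, conj_ofReal, conj_I]; push_cast; ring_nf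
  rw [← hθ]; ring

open Complex in
theorem integral_exp_int_mul_I_of_ne_zero {k : ℤ} (hk : k ≠ 0) :
    ∫ θ in Ioo (-π) π, cexp (k * θ * I) = 0 := by
  have hkI : (k * I : ℂ) ≠ 0 := mul_ne_zero (Int.cast_ne_zero.2 hk) I_ne_zero
  have hperiod : cexp (k * I * π) = cexp (k * I * (-π : ℝ)) := by
    rw [show (k * I * π : ℂ) = k * I * (-π : ℝ) + k * (2 * π * I) by push_cast; ring,
      exp_add, exp_int_mul_two_pi_mul_I, mul_one]
  rw [← integral_Ioc_eq_integral_Ioo, ← intervalIntegral.integral_of_le (by linarith [Real.pi_pos])]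
  simp_rw [mul_right_comm _ _ I]
  rw [integral_exp_mul_complex hkI, hperiod, sub_self, zero_div]

theorem integral_Ioo_zpow {a b : ℝ} (ha : 0 < a) (hab : a ≤ b) {k : ℤ} (hk : k ≠ -1) :
    ∫ r in Ioo a b, r ^ k = (b ^ (k + 1) - a ^ (k + 1)) / (k + 1) := by
  rw [← integral_Ioc_eq_integral_Ioo, ← intervalIntegral.integral_of_le hab,
    integral_zpow (.inr ⟨hk, fun h0 => by linarith [(uIcc_of_le hab ▸ h0).1]⟩)]

theorem integral_annulus_zpow_mul_conj_zpow {a : ℝ} (ha : 0 ≤ a) (b : ℝ) (p q : ℤ) :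
    ∫ w in annulus a b, w ^ p * conj (w ^ q) =
      (∫ r in Ioo a b, (r : ℂ) ^ (p + q + 1)) *
        ∫ θ in Ioo (-π) π, Complex.exp ((p - q : ℤ) * θ * Complex.I) := by
  have hpolar : ∀ x ∈ polarCoord.target,
      x.1 • (annulus a b).indicator (fun w => w ^ p * conj (w ^ q)) (Complex.polarCoord.symm x) =
        (Ioo a b ×ˢ Ioo (-π) π).indicator (fun x : ℝ × ℝ =>
          (x.1 : ℂ) ^ (p + q + 1) * Complex.exp ((p - q : ℤ) * x.2 * Complex.I)) x := by
    rintro ⟨r, θ⟩ ⟨hr, hθ⟩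
    have hr : 0 < r := hr
    have hmem : Complex.polarCoord.symm (r, θ) ∈ annulus a b ↔ (r, θ) ∈ Ioo a b ×ˢ Ioo (-π) π := by
      simp [annulus, abs_of_pos hr, hθ]
    by_cases h : (r, θ) ∈ Ioo a b ×ˢ Ioo (-π) π
    · rw [indicator_of_mem (hmem.2 h), indicator_of_mem h]
      exact polarCoord_symm_zpow_mul_conj_zpow hr θ p q
    · rw [indicator_of_notMem (mt hmem.1 h), indicator_of_notMem h, smul_zero]
  have htarget : polarCoord.target ∩ Ioo a b ×ˢ Ioo (-π) π = Ioo a b ×ˢ Ioo (-π) π :=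
    inter_eq_right.2 (prod_mono (fun r hr => ha.trans_lt hr.1) subset_rfl)
  rw [← integral_indicator (measurableSet_annulus a b),
    ← Complex.integral_comp_polarCoord_symm, setIntegral_congr_fun
      polarCoord.open_target.measurableSet hpolar, setIntegral_indicator
      (measurableSet_Ioo.prod measurableSet_Ioo), htarget, Measure.volume_eq_prod,
    ← Measure.prod_restrict]
  exact integral_prod_mul (fun r : ℝ => (r : ℂ) ^ (p + q + 1))
    (fun θ : ℝ => Complex.exp ((p - q : ℤ) * θ * Complex.I))

theorem integral_annulus_zpow_mul_conj_zpow_of_ne {a : ℝ} (ha : 0 ≤ a) (b : ℝ) {p q : ℤ}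
    (hpq : p ≠ q) : ∫ w in annulus a b, w ^ p * conj (w ^ q) = 0 := by
  rw [integral_annulus_zpow_mul_conj_zpow ha, integral_exp_int_mul_I_of_ne_zero
    (sub_ne_zero.2 hpq), mul_zero]

theorem integral_annulus_zpow_mul_conj_self {a b : ℝ} (ha : 0 < a) (hab : a ≤ b) {p : ℤ}
    (hp : p ≠ -1) :
    ∫ w in annulus a b, w ^ p * conj (w ^ p) =
      ((π * (b ^ (2 * p + 2) - a ^ (2 * p + 2)) / (p + 1) : ℝ) : ℂ) := by
  have hp' : 2 * p + 1 ≠ -1 := by omega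
  have hp1 : (p : ℝ) + 1 ≠ 0 := by exact_mod_cast (show p + 1 ≠ 0 by omega)
  rw [integral_annulus_zpow_mul_conj_zpow ha.le]
  simp only [sub_self, Int.cast_zero, zero_mul, Complex.exp_zero]
  rw [setIntegral_const]
  simp_rw [← Complex.ofReal_zpow]
  rw [integral_complex_ofReal, show p + p + 1 = 2 * p + 1 by ring, integral_Ioo_zpow ha hab hp',
    Real.volume_real_Ioo_of_le (by linarith [Real.pi_pos]), Complex.real_smul, mul_one,
    ← Complex.ofReal_mul]
  congr 1
  rw [show ((2 * p + 1 : ℤ) : ℝ) + 1 = 2 * (p + 1) by push_cast; ring,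
    show 2 * p + 1 + 1 = 2 * p + 2 by ring]
  field_simp
  ring

theorem fiberWeight_eq (n : ℤ) (φ α : ℂ → ℝ) (z : ℂ) :
    fiberWeight n φ α z = π * (Real.exp (-α z) ^ (2 * -n + 2) - Real.exp (-φ z) ^ (2 * -n + 2)) /
      ((-n : ℤ) + 1 : ℝ) := by
  simp_rw [← Real.rpow_intCast, ← Real.exp_mul, fiberWeight]
  rw [← neg_div_neg_eq]
  push_cast
  ring_nf

theorem integral_annulus_zpow_neg_mul_conj_eq_fiberWeight {n : ℤ} (hn : n ≠ 1) {φ α : ℂ → ℝ}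
    {z : ℂ} (hαφ : α z ≤ φ z) :
    ∫ w in annulus (Real.exp (-φ z)) (Real.exp (-α z)), w ^ (-n) * conj (w ^ (-n)) =
      fiberWeight n φ α z := by
  rw [integral_annulus_zpow_mul_conj_self (Real.exp_pos _) (Real.exp_le_exp.2 (neg_le_neg hαφ))
    (by omega), fiberWeight_eq]

theorem integral_annulus_norm_zpow_neg_sq_eq_fiberWeight {n : ℤ} (hn : n ≠ 1) {φ α : ℂ → ℝ}
    {z : ℂ} (hαφ : α z ≤ φ z) :
    ∫ w in annulus (Real.exp (-φ z)) (Real.exp (-α z)), ‖w ^ (-n)‖ ^ 2 = fiberWeight n φ α z := by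
  apply Complex.ofReal_injective
  rw [← integral_complex_ofReal, ← integral_annulus_zpow_neg_mul_conj_eq_fiberWeight hn hαφ]
  simp_rw [Complex.mul_conj, Complex.normSq_eq_norm_sq]

theorem integrableOn_annulus_norm_zpow_sq {a : ℝ} (ha : 0 < a) (b : ℝ) (p : ℤ) :
    IntegrableOn (fun w : ℂ => ‖w ^ p‖ ^ 2) (annulus a b) := by
  have hK : IsCompact (Metric.closedBall (0 : ℂ) b \ Metric.ball 0 a) :=
    (isCompact_closedBall 0 b).diff Metric.isOpen_ball
  have hcont :
      ContinuousOn (fun w : ℂ => ‖w ^ p‖ ^ 2) (Metric.closedBall 0 b \ Metric.ball 0 a) := by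
    intro w hw
    have hw0 : w ≠ 0 := by rintro rfl; simp [ha] at hw
    exact ((continuousAt_zpow₀ w p (.inl hw0)).norm.pow 2).continuousWithinAt
  exact (hcont.integrableOn_compact hK).mono_set
    fun w hw => ⟨by simpa using hw.2.le, by simpa using hw.1.le⟩

theorem memLp_two_mul_zpow_neg_iff {V : Set ℂ} (hV : MeasurableSet V) {φ α : ℂ → ℝ}
    (hφ : Measurable φ) (hα : Measurable α) (hαφ : ∀ z ∈ V, α z ≤ φ z) {n : ℤ} (hn : n ≠ 1)
    {c : ℂ → ℂ} (hc : AEStronglyMeasurable (fun p : ℂ × ℂ => c p.1 * p.2 ^ (-n))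
      (volume.restrict (hartogsSet V (fun z => Real.exp (-φ z)) (fun z => Real.exp (-α z))))) :
    MemLp (fun p : ℂ × ℂ => c p.1 * p.2 ^ (-n)) 2
        (volume.restrict (hartogsSet V (fun z => Real.exp (-φ z)) (fun z => Real.exp (-α z)))) ↔
      IntegrableOn (fun z => ‖c z‖ ^ 2 * fiberWeight n φ α z) V := by
  rw [memLp_two_iff_integrable_sq_norm hc, ← IntegrableOn, integrableOn_hartogsSet_iff hV
    (by fun_prop) (by fun_prop) (F := fun p => ‖c p.1 * p.2 ^ (-n)‖ ^ 2) (hc.norm.pow 2)]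
  · refine integrableOn_congr_fun (fun z hz => ?_) hV
    simp_rw [norm_pow, norm_norm, norm_mul, mul_pow]
    rw [integral_const_mul, integral_annulus_norm_zpow_neg_sq_eq_fiberWeight hn (hαφ z hz)]
  · intro z _
    simp_rw [norm_mul, mul_pow]
    exact (integrableOn_annulus_norm_zpow_sq (Real.exp_pos _) _ _).const_mul _

/-- Suppose `g` is measurable on `V₁` with finite weighted `L²` norm
`∫_{V₁} |g|² e^{-λ_n} dV < ∞` and is orthogonal in `L²(V₁, λ_n)` to every holomorphic
function with finite weighted norm. Then `G(z,w) = g(z)w^{-n}` belongs to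
`L²(U₁)` and is orthogonal there to `h(z)wᵐ` for every integer `m` and holomorphic `h` on
`V₁` with `h(z)wᵐ ∈ L²(U₁)`. -/
theorem orthogonal_monomial_extension (V₁ : Set ℂ) (hV₁ : IsOpen V₁) (φ α : ℂ → ℝ)
    (hφ : Measurable φ) (hα : Measurable α) (hαφ : ∀ z ∈ V₁, α z < φ z)
    (n : ℤ) (hn : 2 ≤ n) (g : ℂ → ℂ) (hg : Measurable g)
    (hgL2 : Integrable (fun z => ‖g z‖ ^ 2 * fiberWeight n φ α z)
      (volume.restrict V₁))
    (horth : ∀ h : ℂ → ℂ, DifferentiableOn ℂ h V₁ →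
      Integrable (fun z => ‖h z‖ ^ 2 * fiberWeight n φ α z)
        (volume.restrict V₁) →
      ∫ z in V₁, g z * (starRingEnd ℂ) (h z) * ((fiberWeight n φ α z : ℝ) : ℂ) = 0) :
    MemLp (fun p : ℂ × ℂ => g p.1 * p.2 ^ (-n)) 2
      (volume.restrict
        (hartogsSet V₁ (fun z => Real.exp (-φ z)) (fun z => Real.exp (-α z)))) ∧
    ∀ (m : ℤ) (h : ℂ → ℂ), DifferentiableOn ℂ h V₁ →
      MemLp (fun p : ℂ × ℂ => h p.1 * p.2 ^ m) 2
        (volume.restrict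
          (hartogsSet V₁ (fun z => Real.exp (-φ z)) (fun z => Real.exp (-α z)))) →
      ∫ p in hartogsSet V₁ (fun z => Real.exp (-φ z)) (fun z => Real.exp (-α z)),
        g p.1 * p.2 ^ (-n) * (starRingEnd ℂ) (h p.1 * p.2 ^ m) = 0 := by
  have hV : MeasurableSet V₁ := hV₁.measurableSet
  have hαφ' : ∀ z ∈ V₁, α z ≤ φ z := fun z hz => (hαφ z hz).le
  have hn1 : n ≠ 1 := by omega
  have hG := (memLp_two_mul_zpow_neg_iff hV hφ hα hαφ' hn1
    (by fun_prop : Measurable fun p : ℂ × ℂ => g p.1 * p.2 ^ (-n)).aestronglyMeasurable).2 hgL2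
  refine ⟨hG, fun m h hh hH => ?_⟩
  rw [integral_hartogsSet_mul_zpow_mul_conj hV (by fun_prop) (by fun_prop)
    (hG.integrable_mul hH.star)]
  obtain rfl | hm := eq_or_ne m (-n)
  · rw [← horth h hh ((memLp_two_mul_zpow_neg_iff hV hφ hα hαφ' hn1 hH.1).1 hH)]
    refine setIntegral_congr_fun hV fun z hz => ?_
    rw [integral_annulus_zpow_neg_mul_conj_eq_fiberWeight hn1 (hαφ' z hz)]
  · simp only [integral_annulus_zpow_mul_conj_zpow_of_ne (Real.exp_pos _).le _ hm.symm, mul_zero,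
      integral_zero]
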